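/- Let X ∼ P and Y ∼ Q be real random variables where Q is atomless with CDF F_Y, and let a ≠ 0 and b be real constants. Let F_{aY+b} denote the CDF of aY + b. Then the random variables min{F_{aY+b}(aX + b), 1 − F_{aY+b}(aX + b)} and min{F_Y(X), 1 − F_Y(X)} have the same distribution; i.e., the halfspace depth random variable HD(aX+b; Q̃), where Q̃ is the law of aY+b, is identically distributed to HD(X; Q). Consequently the halfspace-depth-induced divergence D̃^{HD}(P‖Q) = D(Q_P^{HD} ‖ U) is invariant under the common affine transformation x ↦ ax + b of both distributions, for any divergence D. -/

import Mathlib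

open MeasureTheory Set
open scoped ENNReal

/-!
An increasing affine map `y ↦ a y + b` carries `Iic x` onto `Iic (a x + b)`, so it preserves the
CDF at corresponding points; a decreasing one carries `Ici x` onto it, and for an atomless law
`Q (Ici x) = 1 - F_Y x`. Either way the depth `min (F, 1 - F)` is unchanged pointwise, since it
is symmetric under `F ↦ 1 - F`; hence so are its law under `P` and every divergence of that law.
-/

section AffineImage

variable (Q : Measure ℝ) {a : ℝ} (b x : ℝ)

lemma preimage_affine_Iic_of_pos (ha : 0 < a) :
    (fun y => a * y + b) ⁻¹' Iic (a * x + b) = Iic x := by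
  ext y
  simp only [mem_preimage, mem_Iic, add_le_add_iff_right, mul_le_mul_iff_right₀ ha]

lemma preimage_affine_Iic_of_neg (ha : a < 0) :
    (fun y => a * y + b) ⁻¹' Iic (a * x + b) = Ici x := by
  ext y
  simp only [mem_preimage, mem_Iic, mem_Ici, add_le_add_iff_right, mul_le_mul_left_of_neg ha]

lemma map_affine_Iic_of_pos (ha : 0 < a) :
    Q.map (fun y => a * y + b) (Iic (a * x + b)) = Q (Iic x) := by
  rw [Measure.map_apply (by fun_prop) measurableSet_Iic, preimage_affine_Iic_of_pos b x ha]

lemma map_affine_Iic_of_neg (ha : a < 0) :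
    Q.map (fun y => a * y + b) (Iic (a * x + b)) = Q (Ici x) := by
  rw [Measure.map_apply (by fun_prop) measurableSet_Iic, preimage_affine_Iic_of_neg b x ha]

end AffineImage

lemma measure_Ici_eq_one_sub_Iic (Q : Measure ℝ) [IsProbabilityMeasure Q] [NullSingletonClass Q]
    (x : ℝ) : Q (Ici x) = 1 - Q (Iic x) := by
  rw [← measure_congr (Ioi_ae_eq_Ici (μ := Q)), ← compl_Iic, prob_compl_eq_one_sub measurableSet_Iic]

lemma min_one_sub_symm (t : ℝ) : min (1 - t) (1 - (1 - t)) = min t (1 - t) := by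
  rw [sub_sub_cancel, min_comm]

lemma min_cdf_map_affine (Q : Measure ℝ) [IsProbabilityMeasure Q] [NullSingletonClass Q]
    {a : ℝ} (ha : a ≠ 0) (b x : ℝ) :
    min (Q.map (fun y => a * y + b) (Iic (a * x + b))).toReal
        (1 - (Q.map (fun y => a * y + b) (Iic (a * x + b))).toReal) =
      min (Q (Iic x)).toReal (1 - (Q (Iic x)).toReal) := by
  rcases ha.lt_or_gt with hneg | hpos
  · rw [map_affine_Iic_of_neg Q b x hneg, measure_Ici_eq_one_sub_Iic,
      ENNReal.toReal_sub_of_le prob_le_one ENNReal.one_ne_top, ENNReal.toReal_one,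
      min_one_sub_symm]
  · rw [map_affine_Iic_of_pos Q b x hpos]

theorem hd_affine_invariance
    (P Q : Measure ℝ) [IsProbabilityMeasure Q] [NullSingletonClass Q]
    (a b : ℝ) (ha : a ≠ 0)
    (FY G : ℝ → ℝ)
    (hFY : ∀ x, FY x = (Q (Iic x)).toReal)
    (hG : ∀ t, G t = ((Measure.map (fun y => a * y + b) Q) (Iic t)).toReal) :
    Measure.map (fun x => min (G (a * x + b)) (1 - G (a * x + b))) P =
      Measure.map (fun x => min (FY x) (1 - FY x)) P ∧
    ∀ D : Measure ℝ → Measure ℝ → ℝ,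
      D (Measure.map (fun x => min (G (a * x + b)) (1 - G (a * x + b))) P)
          ((2 : ℝ≥0∞) • volume.restrict (Icc (0 : ℝ) (1 / 2))) =
      D (Measure.map (fun x => min (FY x) (1 - FY x)) P)
          ((2 : ℝ≥0∞) • volume.restrict (Icc (0 : ℝ) (1 / 2))) := by
  have depth_eq : (fun x => min (G (a * x + b)) (1 - G (a * x + b))) =
      fun x => min (FY x) (1 - FY x) := by
    funext x
    simp only [hG, hFY, min_cdf_map_affine Q ha b x]
  exact ⟨by rw [depth_eq], fun D => by rw [depth_eq]⟩
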